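/- arXiv:1205.6971 — 2 statements merged into one kernel-verified Lean document; each statement's English description precedes it below -/
import Mathlib

section
/- Let $I$ be a monomial ideal in $S=\mathbb{K}[x_1,\dots,x_n]$. Then for every integer $k\geq 1$, $\mathrm{sdepth}(\overline{I^k})\leq \mathrm{sdepth}(\overline{I})$ and $\mathrm{sdepth}(S/\overline{I^k})\leq \mathrm{sdepth}(S/\overline{I})$. -/
open MvPolynomial

noncomputable section

/-- `I` is a monomial ideal: it is generated by a set of monomials. -/
def IsMonomialIdeal {K : Type*} [Field K] {n : ℕ} (I : Ideal (MvPolynomial (Fin n) K)) : Prop :=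
  ∃ A : Set (Fin n →₀ ℕ),
    I = Ideal.span ((fun d => (monomial d (1 : K) : MvPolynomial (Fin n) K)) '' A)

/-- The integral closure of a monomial ideal `I`: the ideal generated by all monomials `u`
such that `u ^ m ∈ I ^ m` for some `m ≥ 1`. -/
def intCl {K : Type*} [Field K] {n : ℕ} (I : Ideal (MvPolynomial (Fin n) K)) :
    Ideal (MvPolynomial (Fin n) K) :=
  Ideal.span {u | (∃ d : Fin n →₀ ℕ, u = monomial d (1 : K)) ∧ ∃ m : ℕ, 1 ≤ m ∧ u ^ m ∈ I ^ m}

/-- The set of exponent vectors of monomials belonging to `I`. -/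
def monomialSet {K : Type*} [Field K] {n : ℕ} (I : Ideal (MvPolynomial (Fin n) K)) :
    Set (Fin n →₀ ℕ) :=
  {d | (monomial d (1 : K) : MvPolynomial (Fin n) K) ∈ I}

/-- The set of exponent vectors of the monomials in the Stanley space `a·K[Z]`. -/
def stanleySpace {n : ℕ} (a : Fin n →₀ ℕ) (Z : Finset (Fin n)) : Set (Fin n →₀ ℕ) :=
  {b | (∀ i, a i ≤ b i) ∧ ∀ i ∉ Z, b i = a i}

/-- `D` is a Stanley decomposition of the set of monomials `M`. -/
def IsStanleyDecomp {n : ℕ} (M : Set (Fin n →₀ ℕ))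
    (D : Finset ((Fin n →₀ ℕ) × Finset (Fin n))) : Prop :=
  (∀ p ∈ D, stanleySpace p.1 p.2 ⊆ M) ∧
  (∀ b ∈ M, ∃ p ∈ D, b ∈ stanleySpace p.1 p.2) ∧
  (∀ p ∈ D, ∀ q ∈ D, p ≠ q → Disjoint (stanleySpace p.1 p.2) (stanleySpace q.1 q.2))

/-- Stanley depth of a set of monomials. -/
def sdepthSet {n : ℕ} (M : Set (Fin n →₀ ℕ)) : ℕ :=
  sSup {k | k ≤ n ∧ ∃ D : Finset ((Fin n →₀ ℕ) × Finset (Fin n)),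
    IsStanleyDecomp M D ∧ ∀ p ∈ D, k ≤ p.2.card}

/-- Stanley depth of a monomial ideal `I` (as a module). -/
def sdepthI {K : Type*} [Field K] {n : ℕ} (I : Ideal (MvPolynomial (Fin n) K)) : ℕ :=
  sdepthSet (monomialSet I)

/-- Stanley depth of `S/I` for a monomial ideal `I`. -/
def sdepthQ {K : Type*} [Field K] {n : ℕ} (I : Ideal (MvPolynomial (Fin n) K)) : ℕ :=
  sdepthSet (monomialSet I)ᶜ

/-- Stanley depth of `I/J` for monomial ideals `J ⊆ I`. -/
def sdepthIJ {K : Type*} [Field K] {n : ℕ} (I J : Ideal (MvPolynomial (Fin n) K)) : ℕ :=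
  sdepthSet (monomialSet I \ monomialSet J)

/-!
Scaling exponents by `k` matches the monomials of `intCl I` with the monomials of
`intCl (I ^ k)` whose exponents lie in `k • ℕⁿ`: `u ^ m ∈ I ^ m` for some `m ≥ 1` iff
`(u ^ k) ^ m ∈ (I ^ k) ^ m` for some `m ≥ 1`. Hence a Stanley decomposition of either monomial
set for `I ^ k` pulls back along `b ↦ k • b` to one for `I`: a space `a·K[Z]` meets `k • ℕⁿ`
only if `k ∣ a i` for all `i ∉ Z`, and then its preimage is `(a ⌈/⌉ k)·K[Z]`, with the same `Z`.
-/

section StanleyDecomposition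

variable {n : ℕ}

lemma dvd_of_smul_mem_stanleySpace {k : ℕ} {a b : Fin n →₀ ℕ} {Z : Finset (Fin n)}
    (h : k • b ∈ stanleySpace a Z) {i : Fin n} (hi : i ∉ Z) : k ∣ a i :=
  ⟨b i, by simpa using (h.2 i hi).symm⟩

lemma mem_stanleySpace_ceilDiv_iff {k : ℕ} (hk : 0 < k) {a : Fin n →₀ ℕ} {Z : Finset (Fin n)}
    (hdvd : ∀ i ∉ Z, k ∣ a i) (b : Fin n →₀ ℕ) :
    b ∈ stanleySpace (a ⌈/⌉ k) Z ↔ k • b ∈ stanleySpace a Z := by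
  have hfix : ∀ i ∉ Z, b i = a i ⌈/⌉ k ↔ k • b i = a i := by
    intro i hi
    obtain ⟨c, hc⟩ := hdvd i hi
    rw [hc, show k * c ⌈/⌉ k = c from smul_ceilDiv hk c, smul_eq_mul, Nat.mul_left_cancel_iff hk]
  simp only [stanleySpace, Set.mem_ofPred_eq, Finsupp.ceilDiv_apply, ceilDiv_le_iff_le_smul hk,
    Finsupp.smul_apply]
  exact and_congr Iff.rfl (forall₂_congr hfix)

/-- The Stanley spaces of `D` that meet `k • ℕⁿ`, pulled back along `b ↦ k • b`. -/
def contractDecomp (k : ℕ) (D : Finset ((Fin n →₀ ℕ) × Finset (Fin n))) :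
    Finset ((Fin n →₀ ℕ) × Finset (Fin n)) :=
  {p ∈ D | ∀ i ∉ p.2, k ∣ p.1 i}.image fun p => (p.1 ⌈/⌉ k, p.2)

lemma IsStanleyDecomp.contractDecomp {k : ℕ} (hk : 0 < k) {M₁ M₂ : Set (Fin n →₀ ℕ)}
    (hM : ∀ b, k • b ∈ M₂ ↔ b ∈ M₁) {D : Finset ((Fin n →₀ ℕ) × Finset (Fin n))}
    (hD : IsStanleyDecomp M₂ D) : IsStanleyDecomp M₁ (contractDecomp k D) := by
  obtain ⟨hsub, hcover, hdisj⟩ := hD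
  simp only [_root_.contractDecomp]
  refine ⟨?_, ?_, ?_⟩
  · simp only [Finset.forall_mem_image, Finset.mem_filter, and_imp]
    exact fun p hp hdvd b hb => (hM b).1 (hsub p hp ((mem_stanleySpace_ceilDiv_iff hk hdvd b).1 hb))
  · simp only [Finset.exists_mem_image, Finset.mem_filter]
    intro b hb
    obtain ⟨p, hp, hbp⟩ := hcover (k • b) ((hM b).2 hb)
    have hdvd : ∀ i ∉ p.2, k ∣ p.1 i := fun i hi => dvd_of_smul_mem_stanleySpace hbp hi
    exact ⟨p, ⟨hp, hdvd⟩, (mem_stanleySpace_ceilDiv_iff hk hdvd b).2 hbp⟩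
  · simp only [Finset.forall_mem_image, Finset.mem_filter, and_imp]
    intro p hp hpdvd q hq hqdvd hne
    have hpq : p ≠ q := by rintro rfl; exact hne rfl
    refine Set.disjoint_left.2 fun b hbp hbq => ?_
    exact Set.disjoint_left.1 (hdisj p hp q hq hpq)
      ((mem_stanleySpace_ceilDiv_iff hk hpdvd b).1 hbp)
      ((mem_stanleySpace_ceilDiv_iff hk hqdvd b).1 hbq)

lemma sdepthSet_le_of_forall_isStanleyDecomp {M₁ M₂ : Set (Fin n →₀ ℕ)}
    (h : ∀ D, IsStanleyDecomp M₂ D →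
      ∃ D', IsStanleyDecomp M₁ D' ∧ ∀ p' ∈ D', ∃ p ∈ D, p.2.card ≤ p'.2.card) :
    sdepthSet M₂ ≤ sdepthSet M₁ := by
  refine csSup_le_csSup' ⟨n, fun c hc => hc.1⟩ ?_
  rintro c ⟨hcn, D, hD, hcard⟩
  obtain ⟨D', hD', hD'card⟩ := h D hD
  refine ⟨hcn, D', hD', fun p' hp' => ?_⟩
  obtain ⟨p, hp, hle⟩ := hD'card p' hp'
  exact (hcard p hp).trans hle

lemma sdepthSet_le_of_smul_mem_iff {k : ℕ} (hk : 0 < k) {M₁ M₂ : Set (Fin n →₀ ℕ)}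
    (hM : ∀ b, k • b ∈ M₂ ↔ b ∈ M₁) : sdepthSet M₂ ≤ sdepthSet M₁ := by
  refine sdepthSet_le_of_forall_isStanleyDecomp fun D hD => ⟨_, hD.contractDecomp hk hM, ?_⟩
  simp only [contractDecomp, Finset.forall_mem_image, Finset.mem_filter]
  exact fun p hp => ⟨p, hp.1, le_rfl⟩

end StanleyDecomposition

section IntegralClosure

variable {K : Type*} [Field K] {n : ℕ}

lemma intCl_eq_span_monomial (I : Ideal (MvPolynomial (Fin n) K)) :
    intCl I = Ideal.span ((fun d => (monomial d (1 : K) : MvPolynomial (Fin n) K)) ''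
      {d | ∃ m, 1 ≤ m ∧ (monomial d (1 : K) : MvPolynomial (Fin n) K) ^ m ∈ I ^ m}) := by
  rw [intCl]
  congr 1
  ext u
  constructor
  · rintro ⟨⟨d, rfl⟩, h⟩
    exact ⟨d, h, rfl⟩
  · rintro ⟨d, h, rfl⟩
    exact ⟨⟨d, rfl⟩, h⟩

lemma monomial_mem_intCl_iff (I : Ideal (MvPolynomial (Fin n) K)) (e : Fin n →₀ ℕ) :
    monomial e (1 : K) ∈ intCl I ↔ ∃ m, 1 ≤ m ∧ monomial e (1 : K) ^ m ∈ I ^ m := by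
  classical
  rw [intCl_eq_span_monomial, mem_ideal_span_monomial_image, support_monomial,
    if_neg one_ne_zero]
  simp only [Finset.mem_singleton, forall_eq, Set.mem_ofPred_eq]
  constructor
  · rintro ⟨d, ⟨m, hm, hd⟩, hde⟩
    refine ⟨m, hm, ?_⟩
    rw [← add_tsub_cancel_of_le hde, ← one_mul (1 : K), ← monomial_mul, mul_pow]
    exact Ideal.mul_mem_right _ _ hd
  · exact fun h => ⟨e, h, le_rfl⟩

lemma smul_mem_monomialSet_intCl_pow_iff (I : Ideal (MvPolynomial (Fin n) K)) {k : ℕ}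
    (hk : 0 < k) (e : Fin n →₀ ℕ) :
    k • e ∈ monomialSet (intCl (I ^ k)) ↔ e ∈ monomialSet (intCl I) := by
  have hmon : (monomial (k • e) (1 : K) : MvPolynomial (Fin n) K) = monomial e 1 ^ k := by
    rw [monomial_pow, one_pow]
  simp only [monomialSet, Set.mem_ofPred_eq, monomial_mem_intCl_iff, hmon, ← pow_mul]
  constructor
  · rintro ⟨m, hm, h⟩
    exact ⟨k * m, Nat.mul_pos hk hm, h⟩
  · rintro ⟨m, hm, h⟩
    refine ⟨m, hm, ?_⟩
    rw [mul_comm, pow_mul, pow_mul]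
    exact Ideal.pow_mem_pow h k

end IntegralClosure

theorem stmt7_general {K : Type*} [Field K] {n : ℕ} (I : Ideal (MvPolynomial (Fin n) K))
    (k : ℕ) (hk : 1 ≤ k) :
    sdepthI (intCl (I ^ k)) ≤ sdepthI (intCl I) ∧
    sdepthQ (intCl (I ^ k)) ≤ sdepthQ (intCl I) :=
  ⟨sdepthSet_le_of_smul_mem_iff hk (smul_mem_monomialSet_intCl_pow_iff I hk),
    sdepthSet_le_of_smul_mem_iff hk fun e => not_congr (smul_mem_monomialSet_intCl_pow_iff I hk e)⟩

theorem stmt7 {K : Type*} [Field K] {n : ℕ} (I : Ideal (MvPolynomial (Fin n) K))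
    (hI : IsMonomialIdeal I) (k : ℕ) (hk : 1 ≤ k) :
    sdepthI (intCl (I ^ k)) ≤ sdepthI (intCl I) ∧
    sdepthQ (intCl (I ^ k)) ≤ sdepthQ (intCl I) :=
  stmt7_general I k hk
end
end

section
/- Let $I$ be a normal monomial ideal in $S=\mathbb{K}[x_1,\dots,x_n]$, i.e., all powers of $I$ are integrally closed. Then for every integer $k\geq 1$, $\mathrm{sdepth}(I^k)\leq \mathrm{sdepth}(I)$ and $\mathrm{sdepth}(S/I^k)\leq \mathrm{sdepth}(S/I)$. -/
/-!
For monomials, `u ∈ I ↔ u ^ k ∈ I ^ k` once `I` is integrally closed, so the exponent vectors of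
the monomials in `I` (and of those outside `I`) are the preimage of the corresponding set for `I ^ k`
under `b ↦ k • b`. A Stanley space `a·K[Z]` meets the image of this map only if `k` divides `a`
outside `Z`, and its preimage is then the Stanley space `⌈a / k⌉·K[Z]`. Pulling back a Stanley
decomposition of `I ^ k` (or of `S / I ^ k`) therefore gives one of `I` (or of `S / I`) with the
same sets of variables.
-/


open MvPolynomial

noncomputable section

lemma Nat.mul_eq_iff_dvd_and_eq_ceilDiv {k a b : ℕ} (hk : 0 < k) :
    k * b = a ↔ k ∣ a ∧ b = a ⌈/⌉ k := by
  constructor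
  · rintro rfl
    exact ⟨dvd_mul_right k b, (smul_ceilDiv hk b).symm⟩
  · rintro ⟨⟨c, rfl⟩, rfl⟩
    exact congrArg (k * ·) (smul_ceilDiv hk c)

lemma smul_mem_stanleySpace_iff {n k : ℕ} (hk : 0 < k) (a b : Fin n →₀ ℕ) (Z : Finset (Fin n)) :
    k • b ∈ stanleySpace a Z ↔ (∀ i ∉ Z, k ∣ a i) ∧ b ∈ stanleySpace (a ⌈/⌉ k) Z := by
  simp only [stanleySpace, Set.mem_ofPred_eq, Finsupp.smul_apply, smul_eq_mul,
    Finsupp.ceilDiv_apply, ceilDiv_le_iff_le_mul hk, Nat.mul_eq_iff_dvd_and_eq_ceilDiv hk]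
  grind

def stanleyDecompCeilDiv {n : ℕ} (k : ℕ) (D : Finset ((Fin n →₀ ℕ) × Finset (Fin n))) :
    Finset ((Fin n →₀ ℕ) × Finset (Fin n)) :=
  open Classical in
  (D.filter fun p => ∀ i ∉ p.2, k ∣ p.1 i).image fun p => (p.1 ⌈/⌉ k, p.2)

lemma mem_stanleyDecompCeilDiv {n k : ℕ} {D : Finset ((Fin n →₀ ℕ) × Finset (Fin n))}
    {p : (Fin n →₀ ℕ) × Finset (Fin n)} :
    p ∈ stanleyDecompCeilDiv k D ↔ ∃ q ∈ D, (∀ i ∉ q.2, k ∣ q.1 i) ∧ (q.1 ⌈/⌉ k, q.2) = p := by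
  classical
  simp [stanleyDecompCeilDiv, and_assoc]

lemma IsStanleyDecomp.ceilDiv {n k : ℕ} (hk : 0 < k) {M M' : Set (Fin n →₀ ℕ)}
    (hM : ∀ b, b ∈ M ↔ k • b ∈ M') {D : Finset ((Fin n →₀ ℕ) × Finset (Fin n))}
    (hD : IsStanleyDecomp M' D) : IsStanleyDecomp M (stanleyDecompCeilDiv k D) := by
  obtain ⟨hsub, hcover, hdisj⟩ := hD
  refine ⟨?_, fun b hb => ?_, ?_⟩
  · rintro _ hp b hb
    obtain ⟨q, hqD, hdvd, rfl⟩ := mem_stanleyDecompCeilDiv.mp hp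
    exact (hM b).mpr (hsub q hqD ((smul_mem_stanleySpace_iff hk _ _ _).mpr ⟨hdvd, hb⟩))
  · obtain ⟨q, hqD, hbq⟩ := hcover _ ((hM b).mp hb)
    obtain ⟨hdvd, hb'⟩ := (smul_mem_stanleySpace_iff hk _ _ _).mp hbq
    exact ⟨_, mem_stanleyDecompCeilDiv.mpr ⟨q, hqD, hdvd, rfl⟩, hb'⟩
  · rintro _ hp _ hp' hne
    obtain ⟨q, hqD, hdvd, rfl⟩ := mem_stanleyDecompCeilDiv.mp hp
    obtain ⟨q', hqD', hdvd', rfl⟩ := mem_stanleyDecompCeilDiv.mp hp'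
    have hqq' : q ≠ q' := by rintro rfl; exact hne rfl
    exact Set.disjoint_left.mpr fun b hb hb' => Set.disjoint_left.mp (hdisj q hqD q' hqD' hqq')
      ((smul_mem_stanleySpace_iff hk _ _ _).mpr ⟨hdvd, hb⟩)
      ((smul_mem_stanleySpace_iff hk _ _ _).mpr ⟨hdvd', hb'⟩)

lemma sdepthSet_le_sdepthSet {n : ℕ} {M M' : Set (Fin n →₀ ℕ)}
    (h : ∀ D, IsStanleyDecomp M' D → ∃ D', IsStanleyDecomp M D' ∧ ∀ p ∈ D', ∃ q ∈ D, q.2 = p.2) :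
    sdepthSet M' ≤ sdepthSet M := by
  unfold sdepthSet
  refine csSup_le_csSup' ⟨n, fun d hd => hd.1⟩ ?_
  rintro d ⟨hdn, D, hD, hcard⟩
  obtain ⟨D', hD', hvars⟩ := h D hD
  refine ⟨hdn, D', hD', fun p hp => ?_⟩
  obtain ⟨q, hq, hqp⟩ := hvars p hp
  exact hqp ▸ hcard q hq

lemma sdepthSet_le_of_mem_iff_smul_mem {n k : ℕ} (hk : 0 < k) {M M' : Set (Fin n →₀ ℕ)}
    (hM : ∀ b, b ∈ M ↔ k • b ∈ M') : sdepthSet M' ≤ sdepthSet M :=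
  sdepthSet_le_sdepthSet fun D hD => ⟨_, hD.ceilDiv hk hM, fun _ hp => by
    obtain ⟨q, hq, -, rfl⟩ := mem_stanleyDecompCeilDiv.mp hp
    exact ⟨q, hq, rfl⟩⟩

lemma mem_monomialSet_iff_smul_mem_pow {K : Type*} [Field K] {n : ℕ}
    {I : Ideal (MvPolynomial (Fin n) K)} (hI : intCl I = I) {k : ℕ} (hk : 0 < k)
    (b : Fin n →₀ ℕ) : b ∈ monomialSet I ↔ k • b ∈ monomialSet (I ^ k) := by
  have hpow : (monomial b (1 : K)) ^ k = monomial (k • b) 1 := by rw [monomial_pow, one_pow]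
  refine ⟨fun hb => ?_, fun hb => ?_⟩
  · exact (hpow ▸ Ideal.pow_mem_pow hb k :)
  · rw [monomialSet, Set.mem_ofPred_eq, ← hI]
    exact Ideal.subset_span ⟨⟨b, rfl⟩, k, hk, hpow ▸ hb⟩

theorem stmt8_general {K : Type*} [Field K] {n : ℕ} (I : Ideal (MvPolynomial (Fin n) K))
    (hnormal : ∀ m : ℕ, 1 ≤ m → intCl (I ^ m) = I ^ m)
    (k : ℕ) (hk : 1 ≤ k) :
    sdepthI (I ^ k) ≤ sdepthI I ∧ sdepthQ (I ^ k) ≤ sdepthQ I := by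
  have hmem := mem_monomialSet_iff_smul_mem_pow (by simpa using hnormal 1 le_rfl) hk
  exact ⟨sdepthSet_le_of_mem_iff_smul_mem hk hmem,
    sdepthSet_le_of_mem_iff_smul_mem hk fun b => not_congr (hmem b)⟩

theorem stmt8 {K : Type*} [Field K] {n : ℕ} (I : Ideal (MvPolynomial (Fin n) K))
    (hI : IsMonomialIdeal I) (hnormal : ∀ m : ℕ, 1 ≤ m → intCl (I ^ m) = I ^ m)
    (k : ℕ) (hk : 1 ≤ k) :
    sdepthI (I ^ k) ≤ sdepthI I ∧ sdepthQ (I ^ k) ≤ sdepthQ I :=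
  stmt8_general I hnormal k hk
end
end
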